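/- Let β, β' ∈ Π_aff^{re,+} with β + β' = c, let d = (d_0, …, d_{n-1}) be a degree with d_i = 0 for some i, and let z_d = s_{γ_1} s_{γ_2} ⋯ s_{γ_k} be the reduced expression of z_d as a product of reflections in roots γ_1, …, γ_k < c whose supports are pairwise disconnected or which are pairwise perpendicular and comparable. If for every 1 ≤ i ≤ k either β' ∩ γ_i = 0 or both β' > γ_i and β' ⊥ γ_i, then the element w = (s_β s_{β'})^m z_d is reduced for every positive integer m; in particular ℓ((s_β s_{β'})^m z_d) = 2m(n−1) + ℓ(z_d). -/

import Mathlib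

open scoped BigOperators

namespace AffA

/-- Elements `⟨w, λ⟩` representing `w · t_λ` in the affine Weyl group
`W_aff = W ⋉ Q∨` of type `A_{n-1}^{(1)}`; the translation part `λ` is recorded
in `ε`-coordinates. -/
@[ext]
structure Aff (n : ℕ) where
  w : Equiv.Perm (Fin n)
  t : Fin n → ℤ

namespace Aff

variable {n : ℕ}

instance : Nonempty (Aff n) := ⟨⟨1, 0⟩⟩

/-- multiplication: `(w t_λ)(v t_μ) = (wv) t_{v⁻¹λ + μ}`. -/
def mul' (x y : Aff n) : Aff n := ⟨x.w * y.w, fun i => x.t (y.w i) + y.t i⟩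

def inv' (x : Aff n) : Aff n := ⟨x.w⁻¹, fun i => - x.t (x.w⁻¹ i)⟩

instance : Group (Aff n) where
  mul := mul'
  one := ⟨1, 0⟩
  inv := inv'
  mul_assoc a b c := by
    show mul' (mul' a b) c = mul' a (mul' b c)
    simp only [mul', Aff.mk.injEq]
    refine ⟨mul_assoc _ _ _, funext fun i => ?_⟩
    simp [Equiv.Perm.mul_apply, add_assoc]
  one_mul a := by
    obtain ⟨aw, av⟩ := a
    show mul' ⟨1, 0⟩ ⟨aw, av⟩ = ⟨aw, av⟩
    simp only [mul', Aff.mk.injEq]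
    exact ⟨one_mul _, funext fun i => by simp⟩
  mul_one a := by
    obtain ⟨aw, av⟩ := a
    show mul' ⟨aw, av⟩ ⟨1, 0⟩ = ⟨aw, av⟩
    simp only [mul', Aff.mk.injEq]
    exact ⟨mul_one _, funext fun i => by simp⟩
  inv_mul_cancel a := by
    obtain ⟨aw, av⟩ := a
    show mul' (inv' ⟨aw, av⟩) ⟨aw, av⟩ = ⟨1, 0⟩
    simp only [mul', inv', Aff.mk.injEq]
    exact ⟨inv_mul_cancel _, funext fun i => by simp⟩

/-- cyclic successor on the vertices `α_0, …, α_{n-1}` of the affine Dynkin diagram. -/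
def fsucc (i : Fin n) : Fin n :=
  ⟨(i.val + 1) % n, Nat.mod_lt _ (Nat.lt_of_le_of_lt (Nat.zero_le _) i.isLt)⟩

/-- the coefficient of `α_0`. -/
def coeff0 (a : Fin n → ℤ) : ℤ := if h : 0 < n then a ⟨0, h⟩ else 0

/-- the `ε`-coordinates of the finite part of an element of the affine root
lattice written in the coordinates of the simple roots `α_0, …, α_{n-1}`
(`δ` is sent to `0`). -/
def finPart (a : Fin n → ℤ) : Fin n → ℤ := fun i => a (fsucc i) - a i

/-- `c = δ = α_0 + α_1 + ⋯ + α_{n-1}`, in simple root coordinates. -/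
def cvec (n : ℕ) : Fin n → ℤ := fun _ => 1

/-- the affine Cartan matrix of type `A_{n-1}^{(1)}` (for `n ≥ 3`). -/
def cartan (i j : Fin n) : ℤ :=
  if i = j then 2 else if j = fsucc i ∨ i = fsucc j then -1 else 0

/-- the natural pairing `⟨a, b∨⟩` of elements of the affine root lattice
(simple root coordinates). -/
def pairing (a b : Fin n → ℤ) : ℤ := ∑ i : Fin n, ∑ j : Fin n, a i * cartan i j * b j

/-- real roots of the affine root system: lattice vectors of norm `2`. -/
def IsRealRoot (a : Fin n → ℤ) : Prop := pairing a a = 2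

/-- affine positive real roots: real roots with nonnegative coordinates. -/
def IsPosRoot (a : Fin n → ℤ) : Prop := IsRealRoot a ∧ ∀ i, 0 ≤ a i

/-- perpendicularity of affine roots. -/
def Perp (a b : Fin n → ℤ) : Prop := pairing a b = 0

/-- the support of an affine root. -/
def supp (a : Fin n → ℤ) : Finset (Fin n) := Finset.univ.filter fun i => a i ≠ 0

/-- the supports of `a` and `b` are disconnected in the affine Dynkin diagram
(a cycle on `α_0, …, α_{n-1}`): no vertex of one is equal or adjacent to a
vertex of the other. -/
def Disconn (a b : Fin n → ℤ) : Prop :=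
  ∀ i j : Fin n, a i ≠ 0 → b j ≠ 0 → i ≠ j ∧ j ≠ fsucc i ∧ i ≠ fsucc j

/-- for roots `a, b < c` (0–1 vectors), `a ∩ b = Σ_{α_i ∈ supp a ∩ supp b} α_i`. -/
def inter (a b : Fin n → ℤ) : Fin n → ℤ :=
  fun i => if a i ≠ 0 ∧ b i ≠ 0 then 1 else 0

instance : Nonempty (Equiv.Perm (Fin n)) := ⟨1⟩

/-- the reflection `s_β = s_α t_{mα}` associated to the real root `β = α + mδ`
(given in simple root coordinates). -/
noncomputable def sref (a : Fin n → ℤ) : Aff n :=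
  ⟨Classical.epsilon fun w : Equiv.Perm (Fin n) => ∃ p q : Fin n,
      finPart a = Pi.single p 1 - Pi.single q 1 ∧ w = Equiv.swap p q,
    fun i => coeff0 a * finPart a i⟩

/-- the simple reflections `s_0, …, s_{n-1}`. -/
noncomputable def simple (i : Fin n) : Aff n := sref (Pi.single i 1)

/-- the Coxeter length, via the Iwahori–Matsumoto formula
`ℓ(w t_λ) = Σ_{γ ∈ Π⁺} |χ(w·γ < 0) + ⟨λ, γ⟩|`. -/
def len (x : Aff n) : ℕ :=
  ∑ p : Fin n, ∑ q : Fin n,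
    if p < q then ((if x.w q < x.w p then (1 : ℤ) else 0) + (x.t p - x.t q)).natAbs else 0

/-- translation `t_v` by an element `v` of the (co)root lattice given in
`ε`-coordinates. -/
def trE (v : Fin n → ℤ) : Aff n := ⟨1, v⟩

/-- a Bruhat step: an edge of the moment graph which increases the length. -/
def bstep (u v : Aff n) : Prop :=
  (∃ a, IsPosRoot a ∧ v = u * sref a) ∧ len u < len v

/-- the Bruhat order: `u ≤ v` iff there is an increasing chain from `u` to `v`
in the moment graph. -/
def ble (u v : Aff n) : Prop := Relation.ReflTransGen bstep u v

/-- there is a chain in the moment graph from `u` to `v` of total degree `≤ d`. -/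
def ChainTo (d : Fin n → ℤ) (u v : Aff n) : Prop :=
  ∃ l : List (Fin n → ℤ),
    (∀ b ∈ l, IsPosRoot b) ∧ l.sum ≤ d ∧ v = u * (l.map sref).prod

/-- the set of elements reachable from some `u' ≤ u` by a chain of degree `≤ d`. -/
def nbhdSet (d : Fin n → ℤ) (u : Aff n) : Set (Aff n) :=
  {v | ∃ u', ble u' u ∧ ChainTo d u' v}

/-- the combinatorial curve neighborhood `Γ_d(u)`: the Bruhat-maximal elements
among those reachable from some `u' ≤ u` by a chain of degree `≤ d`. -/
def curveNbhd (d : Fin n → ℤ) (u : Aff n) : Set (Aff n) :=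
  {v | v ∈ nbhdSet d u ∧ ∀ x ∈ nbhdSet d u, ble v x → x = v}

/-- one step of the Hecke product. -/
noncomputable def heckeStep (u : Aff n) (i : Fin n) : Aff n :=
  if len u < len (u * simple i) then u * simple i else u

/-- the Hecke product `u · v`: multiply `u` on the right, left to right, by the
letters of a reduced word for `v`. -/
noncomputable def heckeMul (u v : Aff n) : Aff n :=
  (Classical.epsilon fun l : List (Fin n) =>
      (l.map simple).prod = v ∧ l.length = len v).foldl heckeStep u

/-- the Hecke product `s_{β_1} · s_{β_2} · ⋯ · s_{β_r}` of the reflections of a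
list of roots. -/
noncomputable def heckeList (l : List (Fin n → ℤ)) : Aff n :=
  l.foldl (fun u b => heckeMul u (sref b)) 1

/-- the defining recursion for `z_d`: `z_0 = id` and `z_d = s_α · z_{d-α}`
(Hecke product), where `α` is any maximal root with `α ≤ d`. -/
inductive IsZ : (Fin n → ℤ) → Aff n → Prop
  | zero : IsZ 0 1
  | step {d a : Fin n → ℤ} {x : Aff n} :
      IsPosRoot a → a ≤ d →
      (∀ b, IsPosRoot b → b ≤ d → a ≤ b → b = a) →
      IsZ (d - a) x → IsZ d (heckeMul (sref a) x)

end Aff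
end AffA


/-!
Write `β' = α_{q+1} + ⋯ + α_p` and `μ = ε_q - ε_p`. Because `β + β' = c`, `s_β s_β'` is the
translation `t_μ`. In the Iwahori–Matsumoto formula `ℓ(w t_λ) = Σ_{i<j} |χ(w j < w i) + λ_i - λ_j|`
the term of `t_μ^m z` at `(i, j)` is the term of `z` plus `m (μ(w i) - μ(w j))`, so the lengths add
as soon as these two summands never have opposite signs; moreover `ℓ(t_μ^m) = m ℓ(t_μ) = 2m(n-1)`.

The roots `γ_k < c` are cyclic intervals of simple roots whose endpoints are pairwise distinct, so
near each coordinate `z` acts as a single `s_{γ_k}`. The hypothesis relating `β'` and `γ_k` implies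
that no `γ_k` contains the first or the last simple root of `β'`, and this decides the sign of every
term of `z` that meets `q` or `p`.
-/

namespace AffA
namespace Aff

variable {n : ℕ}

lemma mul_w (x y : Aff n) : (x * y).w = x.w * y.w := rfl

lemma mul_t (x y : Aff n) : (x * y).t = fun i => x.t (y.w i) + y.t i := rfl

lemma one_w : (1 : Aff n).w = 1 := rfl

lemma one_t : (1 : Aff n).t = 0 := rfl

section Lattice

lemma val_fsucc (i : Fin n) : (fsucc i).val = if i.val + 1 = n then 0 else i.val + 1 := by
  have := i.isLt
  split_ifs with h
  · simp [fsucc, h]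
  · exact Nat.mod_eq_of_lt (by omega)

lemma fsucc_eq_finRotate : (fsucc : Fin n → Fin n) = finRotate n := by
  funext i
  rcases n with _ | n
  · exact i.elim0
  · ext
    rw [val_fsucc, finRotate_apply, Fin.val_add_one]
    simp [Fin.ext_iff, Fin.val_last]

lemma sum_comp_fsucc {M : Type*} [AddCommMonoid M] (f : Fin n → M) :
    ∑ i, f (fsucc i) = ∑ i, f i := by
  rw [fsucc_eq_finRotate]
  exact Equiv.sum_comp _ f

lemma cartan_eq (hn : 3 ≤ n) (i j : Fin n) :
    cartan i j = 2 * (if i = j then 1 else 0) - (if j = fsucc i then 1 else 0)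
      - (if i = fsucc j then 1 else 0) := by
  unfold cartan
  simp only [Fin.ext_iff, val_fsucc]
  split_ifs <;> omega

lemma pairing_eq_sum_finPart (hn : 3 ≤ n) (a b : Fin n → ℤ) :
    pairing a b = ∑ i, finPart a i * finPart b i := by
  have hpair : pairing a b = ∑ i, ∑ j, (2 * (if i = j then a i * b j else 0)
      - (if j = fsucc i then a i * b j else 0) - (if i = fsucc j then a i * b j else 0)) := by
    refine Finset.sum_congr rfl fun i _ => Finset.sum_congr rfl fun j _ => ?_
    rw [cartan_eq hn]
    split_ifs <;> ring
  rw [hpair]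
  simp only [Finset.sum_sub_distrib, ← Finset.mul_sum, Finset.sum_ite_eq, Finset.sum_ite_eq',
    Finset.mem_univ, if_true]
  rw [Finset.sum_comm (f := fun i j => if i = fsucc j then a i * b j else 0)]
  simp only [Finset.sum_ite_eq', Finset.mem_univ, if_true, finPart, sub_mul, mul_sub,
    Finset.sum_sub_distrib, sum_comp_fsucc fun i => a i * b i]
  ring

lemma finPart_sub (a b : Fin n → ℤ) : finPart (a - b) = finPart a - finPart b := by
  funext i
  simp only [finPart, Pi.sub_apply]
  ring

lemma eq_of_finPart_eq_zero {a : Fin n → ℤ} (h : finPart a = 0) (i j : Fin n) : a i = a j := by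
  have hn : 0 < n := i.pos
  suffices key : ∀ k (hk : k < n), a ⟨k, hk⟩ = a ⟨0, hn⟩ from
    (key i i.isLt).trans (key j j.isLt).symm
  intro k
  induction k with
  | zero => exact fun _ => rfl
  | succ k ih =>
    intro hk
    have hsucc : fsucc (⟨k, by omega⟩ : Fin n) = ⟨k + 1, hk⟩ := by
      ext; rw [val_fsucc]; simp; omega
    have := congrFun h ⟨k, by omega⟩
    simp only [finPart, hsucc, Pi.zero_apply] at this
    rw [← ih (by omega)]
    linarith

end Lattice

section Arcs

/-- The positive root `α_{u+1} + α_{u+2} + ⋯ + α_v` (indices mod `n`), supported on the cyclic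
interval `(u, v]`; it contains `α_0` exactly when `v < u`. -/
def arcVec (u v : Fin n) : Fin n → ℤ :=
  fun i => (if v < u then 1 else 0) + (if u < i then 1 else 0) - (if v < i then 1 else 0)

lemma finPart_arcVec (u v : Fin n) :
    finPart (arcVec u v) = Pi.single u 1 - Pi.single v 1 := by
  funext i
  simp only [finPart, arcVec, Pi.sub_apply, Pi.single_apply, Fin.lt_def, Fin.ext_iff, val_fsucc]
  have := i.isLt
  split_ifs <;> omega

lemma arcVec_left (u v : Fin n) : arcVec u v u = 0 := by
  simp [arcVec]

lemma arcVec_right {u v : Fin n} (huv : u ≠ v) : arcVec u v v = 1 := by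
  simp only [arcVec, lt_irrefl, if_false]
  split_ifs <;> simp_all [Fin.ext_iff] <;> omega

lemma arcVec_fsucc_left {u v : Fin n} (huv : u ≠ v) : arcVec u v (fsucc u) = 1 := by
  have := congrFun (finPart_arcVec u v) u
  simp only [finPart, Pi.sub_apply, Pi.single_apply, if_true, if_neg huv, arcVec_left] at this
  omega

lemma arcVec_fsucc_right {u v : Fin n} (huv : u ≠ v) : arcVec u v (fsucc v) = 0 := by
  have := congrFun (finPart_arcVec u v) v
  simp only [finPart, Pi.sub_apply, Pi.single_apply, if_true, if_neg huv.symm,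
    arcVec_right huv] at this
  omega

lemma arcVec_nonneg (u v i : Fin n) : 0 ≤ arcVec u v i := by
  simp only [arcVec, Fin.lt_def]
  split_ifs <;> omega

lemma exists_finPart_eq_single_sub_single (hn : 3 ≤ n) {g : Fin n → ℤ} (hg : IsRealRoot g)
    (h01 : ∀ i, g i = 0 ∨ g i = 1) :
    ∃ u v, u ≠ v ∧ finPart g = Pi.single u 1 - Pi.single v 1 := by
  set f := finPart g
  have hval : ∀ i, f i = -1 ∨ f i = 0 ∨ f i = 1 := fun i => by
    rcases h01 i with h | h <;> rcases h01 (fsucc i) with h' | h' <;> simp [f, finPart, h, h']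
  have hsum : ∑ i, f i = 0 := by
    simp only [f, finPart, Finset.sum_sub_distrib, sum_comp_fsucc g, sub_self]
  have hsq : ∑ i, f i * f i = 2 := by rw [← pairing_eq_sum_finPart hn]; exact hg
  have hcard : ∀ s : ℤ, s = 1 ∨ s = -1 → (Finset.univ.filter (f · = s)).card = 1 := by
    intro s hs
    have hpt : ∀ i, (if f i = s then (1 : ℤ) else 0) * 2 = f i * f i + s * f i := fun i => by
      rcases hval i with h | h | h <;> rcases hs with rfl | rfl <;> simp [h]
    have := Finset.sum_congr rfl fun i (_ : i ∈ Finset.univ) => hpt i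
    rw [← Finset.sum_mul, ← Finset.natCast_card_filter, Finset.sum_add_distrib, ← Finset.mul_sum,
      hsq, hsum] at this
    omega
  obtain ⟨u, hu⟩ := Finset.card_eq_one.mp (hcard 1 (Or.inl rfl))
  obtain ⟨v, hv⟩ := Finset.card_eq_one.mp (hcard (-1) (Or.inr rfl))
  have hu' : ∀ i, f i = 1 ↔ i = u := fun i => by simpa using Finset.ext_iff.mp hu i
  have hv' : ∀ i, f i = -1 ↔ i = v := fun i => by simpa using Finset.ext_iff.mp hv i
  have huv : u ≠ v := by
    rintro rfl
    have := (hu' u).mpr rfl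
    rw [(hv' u).mpr rfl] at this
    norm_num at this
  refine ⟨u, v, huv, funext fun i => ?_⟩
  rcases hval i with h | h | h
  · obtain rfl := (hv' i).mp h
    simp [h, huv]
  · have hiu : i ≠ u := fun e => by simp [(hu' i).mpr e] at h
    have hiv : i ≠ v := fun e => by simp [(hv' i).mpr e] at h
    simp [h, hiu, hiv]
  · obtain rfl := (hu' i).mp h
    simp [h, huv]

lemma exists_eq_arcVec (hn : 3 ≤ n) {g : Fin n → ℤ} (hg : IsRealRoot g)
    (h01 : ∀ i, g i = 0 ∨ g i = 1) : ∃ u v, u ≠ v ∧ g = arcVec u v := by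
  obtain ⟨u, v, huv, hf⟩ := exists_finPart_eq_single_sub_single hn hg h01
  refine ⟨u, v, huv, funext fun i => ?_⟩
  have hconst := eq_of_finPart_eq_zero (a := g - arcVec u v)
    (by rw [finPart_sub, hf, finPart_arcVec u v, sub_self])
  have hi := hconst i u
  have hv := hconst v u
  simp only [Pi.sub_apply, arcVec_left, arcVec_right huv] at hi hv
  rcases h01 u with h | h <;> rcases h01 v with h' | h' <;> omega

lemma zero_or_one_of_le_cvec {g : Fin n → ℤ} (h0 : ∀ i, 0 ≤ g i) (hle : g ≤ cvec n) (i : Fin n) :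
    g i = 0 ∨ g i = 1 := by
  have := h0 i
  have := hle i
  simp only [cvec] at this
  omega

lemma exists_list_arcVec (hn : 3 ≤ n) (l : List (Fin n → ℤ))
    (hl : ∀ γ ∈ l, IsPosRoot γ ∧ γ < cvec n) :
    ∃ L : List (Fin n × Fin n), (∀ e ∈ L, e.1 ≠ e.2) ∧ l = L.map fun e => arcVec e.1 e.2 := by
  induction l with
  | nil => exact ⟨[], by simp, rfl⟩
  | cons γ l ih =>
    obtain ⟨hγ, hlt⟩ := hl γ List.mem_cons_self
    obtain ⟨u, v, huv, rfl⟩ := exists_eq_arcVec hn hγ.1 (zero_or_one_of_le_cvec hγ.2 hlt.le)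
    obtain ⟨L, hne, rfl⟩ := ih fun γ hγ => hl γ (List.mem_cons_of_mem _ hγ)
    exact ⟨(u, v) :: L, by simpa [huv] using hne, rfl⟩

lemma pairing_arcVec (hn : 3 ≤ n) (u v u' v' : Fin n) :
    pairing (arcVec u v) (arcVec u' v') = (if u = u' then 1 else 0) - (if u = v' then 1 else 0)
      - (if v = u' then 1 else 0) + (if v = v' then 1 else 0) := by
  simp only [pairing_eq_sum_finPart hn, finPart_arcVec, Pi.sub_apply, Pi.single_apply, sub_mul,
    mul_sub, ite_mul, one_mul, zero_mul, Finset.sum_sub_distrib, Finset.sum_ite_eq',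
    Finset.mem_univ, if_true]
  split_ifs <;> simp_all

lemma endpoints_ne_of_perp (hn : 3 ≤ n) {u v u' v' : Fin n} (huv : u ≠ v) (huv' : u' ≠ v')
    (h : Perp (arcVec u v) (arcVec u' v')) : u ≠ u' ∧ u ≠ v' ∧ v ≠ u' ∧ v ≠ v' := by
  rw [Perp, pairing_arcVec hn] at h
  refine ⟨?_, ?_, ?_, ?_⟩ <;> rintro rfl <;> split_ifs at h <;> simp_all

lemma endpoints_ne_of_disconn {u v u' v' : Fin n} (huv : u ≠ v) (huv' : u' ≠ v')
    (h : Disconn (arcVec u v) (arcVec u' v')) : u ≠ u' ∧ u ≠ v' ∧ v ≠ u' ∧ v ≠ v' := by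
  have hu := arcVec_fsucc_left huv
  have hv := arcVec_right huv
  have hu' := arcVec_fsucc_left huv'
  have hv' := arcVec_right huv'
  refine ⟨?_, ?_, ?_, ?_⟩ <;> rintro rfl
  · exact (h (fsucc u) (fsucc u) (by simp [hu]) (by simp [hu'])).1 rfl
  · exact (h (fsucc u) u (by simp [hu]) (by simp [hv'])).2.2 rfl
  · exact (h v (fsucc v) (by simp [hv]) (by simp [hu'])).2.1 rfl
  · exact (h v v (by simp [hv]) (by simp [hv'])).1 rfl

lemma pairwise_disjoint_endpoints (hn : 3 ≤ n) {L : List (Fin n × Fin n)}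
    (hne : ∀ e ∈ L, e.1 ≠ e.2)
    (hL : (L.map fun e => arcVec e.1 e.2).Pairwise
      fun γ γ' => Disconn γ γ' ∨ (Perp γ γ' ∧ (γ ≤ γ' ∨ γ' ≤ γ))) :
    L.Pairwise fun e e' => Disjoint ({e.1, e.2} : Set (Fin n)) {e'.1, e'.2} := by
  refine (List.pairwise_map.mp hL).imp_of_mem fun he he' h => ?_
  have := h.elim (endpoints_ne_of_disconn (hne _ he) (hne _ he'))
    fun h => endpoints_ne_of_perp hn (hne _ he) (hne _ he') h.1
  simp only [Set.disjoint_insert_left, Set.disjoint_singleton_left, Set.mem_insert_iff,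
    Set.mem_singleton_iff]
  tauto

end Arcs

section Avoidance

/-- The cyclic interval `(u, v]` contains neither `p` nor `q + 1`, written with the linear order of
`Fin n` (`v < u` is the case where it passes through `0`). -/
def ArcAvoids (q p u v : Fin n) : Prop :=
  (v < u → v ≤ q ∧ q < u ∧ v < p ∧ p ≤ u) ∧ (u < v → (v ≤ q ∨ q < u) ∧ (v < p ∨ p ≤ u))

lemma arcAvoids_of_arcVec_eq_zero {q p u v : Fin n} (hp : arcVec u v p = 0)
    (hq : arcVec u v (fsucc q) = 0) : ArcAvoids q p u v := by
  have hsucc := val_fsucc q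
  simp only [ArcAvoids, arcVec, Fin.lt_def, Fin.le_def] at hp hq ⊢
  split_ifs at hp hq hsucc <;> omega

lemma apply_eq_zero_of_inter_arcVec_eq_zero {q p : Fin n} (hqp : q ≠ p) {g : Fin n → ℤ}
    (h : inter (arcVec q p) g = 0) : g p = 0 ∧ g (fsucc q) = 0 := by
  have hp := congrFun h p
  have hq := congrFun h (fsucc q)
  simp only [inter, arcVec_right hqp, arcVec_fsucc_left hqp, Pi.zero_apply] at hp hq
  constructor <;> by_contra hne <;> simp_all

lemma arcVec_apply_eq_zero_of_le {q p u v : Fin n} (hqp : q ≠ p) (huq : u ≠ q) (hvp : v ≠ p)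
    (hle : arcVec u v ≤ arcVec q p) : arcVec u v p = 0 ∧ arcVec u v (fsucc q) = 0 := by
  have hp := hle (fsucc p)
  have hq := hle q
  rw [arcVec_fsucc_right hqp] at hp
  rw [arcVec_left] at hq
  have fp := congrFun (finPart_arcVec u v) p
  have fq := congrFun (finPart_arcVec u v) q
  simp only [finPart, Pi.sub_apply, Pi.single_apply, if_neg hvp.symm, if_neg huq.symm] at fp fq
  have hpu : 0 ≤ (if p = u then (1 : ℤ) else 0) := by positivity
  have hqv : 0 ≤ (if q = v then (1 : ℤ) else 0) := by positivity
  have := arcVec_nonneg u v q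
  exact ⟨le_antisymm (by linarith) (arcVec_nonneg u v p),
    le_antisymm (by linarith) (arcVec_nonneg u v (fsucc q))⟩

lemma arcAvoids_of_inter_eq_zero_or_lt (hn : 3 ≤ n) {q p u v : Fin n} (hqp : q ≠ p) (huv : u ≠ v)
    (h : inter (arcVec q p) (arcVec u v) = 0 ∨
      (arcVec u v < arcVec q p ∧ Perp (arcVec q p) (arcVec u v))) :
    ArcAvoids q p u v := by
  obtain ⟨hp, hq⟩ := h.elim (apply_eq_zero_of_inter_arcVec_eq_zero hqp) fun ⟨hlt, hperp⟩ => by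
    obtain ⟨hqu, -, -, hpv⟩ := endpoints_ne_of_perp hn hqp huv hperp
    exact arcVec_apply_eq_zero_of_le hqp hqu.symm hpv.symm hlt.le
  exact arcAvoids_of_arcVec_eq_zero hp hq

end Avoidance

section Reflections

/-- `s_γ` for `γ = arcVec u v` (see `sref_arcVec`): the translation part `ε_u - ε_v` occurs
exactly when `γ` contains `α_0`. -/
def arcRef (u v : Fin n) : Aff n :=
  ⟨Equiv.swap u v,
    fun i => (if v < u then 1 else 0) * (Pi.single u 1 - Pi.single v 1 : Fin n → ℤ) i⟩

lemma eq_of_single_sub_single_eq {u v p q : Fin n} (huv : u ≠ v)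
    (h : (Pi.single p 1 - Pi.single q 1 : Fin n → ℤ) = Pi.single u 1 - Pi.single v 1) :
    p = u ∧ q = v := by
  have hu := congrFun h u
  have hv := congrFun h v
  simp only [Pi.sub_apply, Pi.single_apply] at hu hv
  constructor <;> by_contra hne <;> split_ifs at hu hv <;> simp_all

lemma sref_w_eq_swap {a : Fin n → ℤ} {u v : Fin n} (huv : u ≠ v)
    (h : finPart a = Pi.single u 1 - Pi.single v 1) : (sref a).w = Equiv.swap u v := by
  obtain ⟨p, q, hpq, hw⟩ := Classical.epsilon_spec (p := fun w : Equiv.Perm (Fin n) =>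
    ∃ p q : Fin n, finPart a = Pi.single p 1 - Pi.single q 1 ∧ w = Equiv.swap p q)
    ⟨_, u, v, h, rfl⟩
  obtain ⟨rfl, rfl⟩ := eq_of_single_sub_single_eq huv (hpq.symm.trans h)
  exact hw

lemma sref_arcVec {u v : Fin n} (huv : u ≠ v) : sref (arcVec u v) = arcRef u v := by
  have hn : 0 < n := u.pos
  refine Aff.ext (sref_w_eq_swap huv (finPart_arcVec u v)) (funext fun i => ?_)
  have h0 : arcVec u v ⟨0, hn⟩ = if v < u then 1 else 0 := by
    have hu : ¬ u < ⟨0, hn⟩ := Nat.not_lt_zero _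
    have hv : ¬ v < ⟨0, hn⟩ := Nat.not_lt_zero _
    simp only [arcVec, hu, hv, if_false]
    ring
  simp only [sref, arcRef, coeff0, dif_pos hn, h0, finPart_arcVec]

lemma list_prod_sref_arcVec {L : List (Fin n × Fin n)} (hne : ∀ e ∈ L, e.1 ≠ e.2) :
    ((L.map fun e => arcVec e.1 e.2).map sref).prod = (L.map fun e => arcRef e.1 e.2).prod := by
  rw [List.map_map]
  exact congrArg _ (List.map_congr_left fun e he => sref_arcVec (hne e he))

lemma trE_mul (v : Fin n → ℤ) (x : Aff n) : trE v * x = ⟨x.w, fun i => v (x.w i) + x.t i⟩ :=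
  Aff.ext (one_mul _) rfl

lemma trE_pow (v : Fin n → ℤ) (m : ℕ) : trE v ^ m = trE (m • v) := by
  induction m with
  | zero => exact Aff.ext rfl (by simp [trE, one_t])
  | succ m ih =>
    rw [pow_succ, ih, trE_mul]
    refine Aff.ext rfl (funext fun i => ?_)
    simp [trE, add_mul]

/-- Since `a + b = c`, the reflections `s_a` and `s_b` have the same finite part, so their product
is a translation. -/
lemma sref_mul_sref_of_add_eq_cvec {a b : Fin n → ℤ} {q p : Fin n} (hqp : q ≠ p)
    (hab : a + b = cvec n) (hb : finPart b = Pi.single q 1 - Pi.single p 1) :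
    sref a * sref b = trE (Pi.single q 1 - Pi.single p 1) := by
  have hn : 0 < n := q.pos
  have ha : finPart a = Pi.single p 1 - Pi.single q 1 := by
    rw [← add_sub_cancel_right a b, hab, finPart_sub, hb]
    funext i
    simp [finPart, cvec]
  have hc : coeff0 a + coeff0 b = 1 := by
    simpa [coeff0, hn, cvec] using congrFun hab ⟨0, hn⟩
  refine Aff.ext ?_ (funext fun i => ?_)
  · rw [mul_w, sref_w_eq_swap hqp.symm ha, sref_w_eq_swap hqp hb, Equiv.swap_comm,
      Equiv.swap_mul_self]
    rfl
  · have hswap : (Pi.single p 1 - Pi.single q 1 : Fin n → ℤ) (Equiv.swap q p i)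
        = (Pi.single q 1 - Pi.single p 1 : Fin n → ℤ) i := by
      rcases eq_or_ne i q with rfl | hiq
      · simp [hqp]
      rcases eq_or_ne i p with rfl | hip
      · simp [hqp]
      simp [Equiv.swap_apply_of_ne_of_ne hiq hip, hiq, hip]
    rw [mul_t, sref_w_eq_swap hqp hb]
    simp only [sref, ha, hb, hswap, trE]
    linear_combination (Pi.single q 1 - Pi.single p 1 : Fin n → ℤ) i * hc

end Reflections

section Length

/-- The summand of the Iwahori–Matsumoto formula `len` belonging to the root `ε_i - ε_j`. -/
def invTerm (x : Aff n) (i j : Fin n) : ℤ := (if x.w j < x.w i then 1 else 0) + (x.t i - x.t j)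

lemma len_eq_sum_invTerm (x : Aff n) :
    len x = ∑ i, ∑ j, if i < j then (invTerm x i j).natAbs else 0 := rfl

lemma invTerm_trE_mul (v : Fin n → ℤ) (x : Aff n) (i j : Fin n) :
    invTerm (trE v * x) i j = invTerm x i j + (v (x.w i) - v (x.w j)) := by
  simp only [invTerm, trE_mul]
  ring

lemma len_trE (v : Fin n → ℤ) :
    len (trE v) = ∑ i, ∑ j, if i < j then (v i - v j).natAbs else 0 := by
  refine Finset.sum_congr rfl fun i _ => Finset.sum_congr rfl fun j _ => ?_
  by_cases h : i < j
  · have hw : ¬(trE v).w j < (trE v).w i := not_lt.mpr h.le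
    simp only [if_pos h, if_neg hw, zero_add]
    rfl
  · simp only [if_neg h]

lemma two_mul_sum_lt_add_sum_diag {α : Type*} [LinearOrder α] [Fintype α] (f : α → α → ℕ)
    (hf : ∀ i j, f i j = f j i) :
    2 * (∑ i, ∑ j, if i < j then f i j else 0) + ∑ i, f i i = ∑ i, ∑ j, f i j := by
  have hpt : ∀ i j, f i j = (if i < j then f i j else 0) + (if j < i then f j i else 0)
      + (if i = j then f i j else 0) := fun i j => by
    rcases lt_trichotomy i j with h | rfl | h
    · simp [h, h.ne, not_lt.mpr h.le]
    · simp
    · simp [h, h.ne', not_lt.mpr h.le, hf i j]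
  conv_rhs => rw [Finset.sum_congr rfl fun i _ => Finset.sum_congr rfl fun j _ => hpt i j]
  simp only [Finset.sum_add_distrib, Finset.sum_ite_eq, Finset.mem_univ, if_true]
  rw [Finset.sum_comm (f := fun i j => if j < i then f j i else 0)]
  ring

lemma sum_lt_comp_perm {α : Type*} [LinearOrder α] [Fintype α] (f : α → α → ℕ)
    (hf : ∀ i j, f i j = f j i) (σ : Equiv.Perm α) :
    (∑ i, ∑ j, if i < j then f (σ i) (σ j) else 0) = ∑ i, ∑ j, if i < j then f i j else 0 := by
  have h := two_mul_sum_lt_add_sum_diag f hf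
  have hσ := two_mul_sum_lt_add_sum_diag (fun i j => f (σ i) (σ j)) fun i j => hf _ _
  rw [Equiv.sum_comp σ fun i => f i i,
    Finset.sum_congr rfl fun i _ => Equiv.sum_comp σ fun j => f (σ i) j,
    Equiv.sum_comp σ fun i => ∑ j, f i j] at hσ
  omega

lemma natAbs_add_mul_of_mul_nonneg {a b : ℤ} (h : 0 ≤ a * b) (m : ℕ) :
    (a + m * b).natAbs = a.natAbs + m * b.natAbs := by
  have hmb : m * b.natAbs = ((m : ℤ) * b).natAbs := by simp [Int.natAbs_mul]
  rw [hmb]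
  rcases mul_nonneg_iff.mp h with ⟨ha, hb⟩ | ⟨ha, hb⟩
  · have := mul_nonneg (Nat.cast_nonneg (α := ℤ) m) hb
    omega
  · have := mul_nonpos_of_nonneg_of_nonpos (Nat.cast_nonneg (α := ℤ) m) hb
    omega

/-- Termwise `|a + m b| = |a| + m |b|` when `a b ≥ 0`, and `x.w` only permutes the terms of
`t_v`. -/
theorem len_trE_nsmul_mul {v : Fin n → ℤ} {x : Aff n}
    (hsign : ∀ i j, i < j → 0 ≤ invTerm x i j * (v (x.w i) - v (x.w j))) (m : ℕ) :
    len (trE (m • v) * x) = m * len (trE v) + len x := by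
  have hterm : ∀ i j, i < j → (invTerm (trE (m • v) * x) i j).natAbs
      = (invTerm x i j).natAbs + m * (v (x.w i) - v (x.w j)).natAbs := fun i j hij => by
    rw [invTerm_trE_mul, Pi.smul_apply, Pi.smul_apply, nsmul_eq_mul, nsmul_eq_mul, ← mul_sub]
    exact natAbs_add_mul_of_mul_nonneg (hsign i j hij) m
  rw [len_trE, ← sum_lt_comp_perm (fun i j => (v i - v j).natAbs)
    (fun i j => by rw [← Int.natAbs_neg, neg_sub]) x.w, len_eq_sum_invTerm, len_eq_sum_invTerm,
    Finset.mul_sum, ← Finset.sum_add_distrib]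
  refine Finset.sum_congr rfl fun i _ => ?_
  rw [Finset.mul_sum, ← Finset.sum_add_distrib]
  refine Finset.sum_congr rfl fun j _ => ?_
  split_ifs with hij
  · rw [hterm i j hij, add_comm]
  · rfl

lemma len_trE_nsmul (v : Fin n → ℤ) (m : ℕ) : len (trE (m • v)) = m * len (trE v) := by
  have hone : ∀ i j : Fin n, i < j → invTerm 1 i j = 0 := fun i j hij => by
    simp [invTerm, one_w, one_t, not_lt.mpr hij.le]
  have h := len_trE_nsmul_mul (v := v) (x := 1) (fun i j hij => by simp [hone i j hij]) m
  rwa [mul_one, len_eq_sum_invTerm 1, Finset.sum_eq_zero fun i _ => Finset.sum_eq_zero fun j _ => by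
    split_ifs with hij <;> simp [hone i j, hij], add_zero] at h

lemma len_trE_single_sub_single {q p : Fin n} (hqp : q ≠ p) :
    len (trE (Pi.single q 1 - Pi.single p 1)) = 2 * (n - 1) := by
  set v : Fin n → ℤ := Pi.single q 1 - Pi.single p 1
  have habs : ∀ i, (v i).natAbs = (if i = q then 1 else 0) + (if i = p then 1 else 0) := fun i => by
    simp only [v, Pi.sub_apply, Pi.single_apply]
    split_ifs <;> simp_all
  have hpt : ∀ i j, (v i - v j).natAbs + (if i = j then 2 * (v i).natAbs else 0)
      = (v i).natAbs + (v j).natAbs := fun i j => by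
    simp only [v, Pi.sub_apply, Pi.single_apply]
    split_ifs <;> simp_all
  have hsum : ∑ i, (v i).natAbs = 2 := by
    simp [habs, Finset.sum_add_distrib]
  have h2 := two_mul_sum_lt_add_sum_diag (fun i j => (v i - v j).natAbs)
    (fun i j => by rw [← Int.natAbs_neg, neg_sub])
  have hfull := Finset.sum_congr rfl fun i (_ : i ∈ Finset.univ) =>
    Finset.sum_congr rfl fun j (_ : j ∈ Finset.univ) => hpt i j
  simp only [Finset.sum_add_distrib, Finset.sum_ite_eq, Finset.mem_univ, if_true,
    Finset.sum_const, Finset.card_univ, Fintype.card_fin, smul_eq_mul, ← Finset.mul_sum,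
    hsum] at hfull
  simp only [sub_self, Int.natAbs_zero, Finset.sum_const_zero, add_zero] at h2
  rw [len_trE]
  have := q.pos
  omega

end Length

section Products

def entry (x : Aff n) (i : Fin n) : Fin n × ℤ := (x.w i, x.t i)

lemma w_mem_of_entry_eq {x : Aff n} {S : Set (Fin n)} (hfix : ∀ i ∉ S, x.entry i = (i, 0))
    {i : Fin n} (hi : i ∈ S) : x.w i ∈ S := by
  by_contra h
  have hw : x.w (x.w i) = x.w i := congrArg Prod.fst (hfix _ h)
  rw [x.w.injective hw] at h
  exact h hi

lemma entry_list_prod {ι : Type*} (l : List ι) (x : ι → Aff n) (S : ι → Set (Fin n))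
    (hfix : ∀ k ∈ l, ∀ i ∉ S k, (x k).entry i = (i, 0))
    (hdisj : l.Pairwise fun k k' => Disjoint (S k) (S k')) (i : Fin n) :
    (∀ k ∈ l, i ∈ S k → (l.map x).prod.entry i = (x k).entry i) ∧
      ((∀ k ∈ l, i ∉ S k) → (l.map x).prod.entry i = (i, 0)) := by
  induction l with
  | nil => exact ⟨fun k hk => absurd hk List.not_mem_nil, fun _ => rfl⟩
  | cons k₀ l ih =>
    obtain ⟨hdisj₀, hdisj⟩ := List.pairwise_cons.mp hdisj
    obtain ⟨ih_mem, ih_fix⟩ := ih (fun k hk => hfix k (List.mem_cons_of_mem _ hk)) hdisj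
    have hfix₀ := hfix k₀ List.mem_cons_self
    simp only [List.map_cons, List.prod_cons, entry, Prod.ext_iff] at ih_mem ih_fix hfix₀ ⊢
    refine ⟨fun k hk hik => ?_, fun hi => ?_⟩
    · rcases List.mem_cons.mp hk with rfl | hk
      · have := ih_fix fun k' hk' hik' => Set.disjoint_left.mp (hdisj₀ k' hk') hik hik'
        simp [mul_w, mul_t, this]
      · obtain ⟨hw, ht⟩ := ih_mem k hk hik
        have hout : (List.map x l).prod.w i ∉ S k₀ := fun h => Set.disjoint_left.mp
          (hdisj₀ k hk) h (hw ▸ w_mem_of_entry_eq (fun j hj => by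
            simpa [entry] using hfix k (List.mem_cons_of_mem _ hk) j hj) hik)
        rw [hw] at hout
        simp [mul_w, mul_t, hfix₀ _ hout, hw, ht]
    · have := ih_fix fun k' hk' => hi k' (List.mem_cons_of_mem _ hk')
      simp [mul_w, mul_t, this, hfix₀ i (hi k₀ List.mem_cons_self)]

lemma arcRef_entry_of_ne {u v i : Fin n} (hu : i ≠ u) (hv : i ≠ v) :
    (arcRef u v).entry i = (i, 0) := by
  simp [entry, arcRef, Equiv.swap_apply_of_ne_of_ne hu hv, hu, hv]

lemma arcRef_entry_left {u v : Fin n} (huv : u ≠ v) :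
    (arcRef u v).entry u = (v, if v < u then 1 else 0) := by
  simp [entry, arcRef, huv]

lemma arcRef_entry_right {u v : Fin n} (huv : u ≠ v) :
    (arcRef u v).entry v = (u, -if v < u then 1 else 0) := by
  simp only [entry, arcRef, Equiv.swap_apply_right, Pi.sub_apply, Pi.single_apply, if_neg huv.symm,
    if_true, Prod.mk.injEq, true_and]
  ring

end Products

section Sign

lemma mul_nonneg_of_single_sub_single {q p x y : Fin n} (hqp : q ≠ p) (hxy : x ≠ y) {a : ℤ}
    (hpos : x = q ∨ y = p → 0 ≤ a) (hneg : x = p ∨ y = q → a ≤ 0) :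
    0 ≤ a * ((Pi.single q 1 - Pi.single p 1 : Fin n → ℤ) x
      - (Pi.single q 1 - Pi.single p 1 : Fin n → ℤ) y) := by
  simp only [Pi.sub_apply, Pi.single_apply]
  split_ifs <;> subst_vars <;> simp_all
  omega

/-- Only pairs with `x.w i` or `x.w j` in `{q, p}` matter, and for those the endpoint inequalities
of `ArcAvoids` decide the sign of `invTerm x i j`. -/
lemma invTerm_mul_nonneg_of_arcAvoids {q p : Fin n} (hqp : q ≠ p) {x : Aff n}
    (hinv : ∀ i, x.w (x.w i) = i)
    (hx : ∀ i, x.entry i = (i, 0) ∨ ∃ u v, ArcAvoids q p u v ∧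
      ((i = u ∧ x.entry i = (v, if v < u then 1 else 0)) ∨
        (i = v ∧ x.entry i = (u, -if v < u then 1 else 0))))
    {i j : Fin n} (hij : i < j) :
    0 ≤ invTerm x i j * ((Pi.single q 1 - Pi.single p 1 : Fin n → ℤ) (x.w i)
      - (Pi.single q 1 - Pi.single p 1 : Fin n → ℤ) (x.w j)) := by
  have hinj : x.w i ≠ x.w j := x.w.injective.ne hij.ne
  have hswap : x.w j = i ↔ x.w i = j := ⟨fun h => by rw [← h, hinv], fun h => by rw [← h, hinv]⟩
  have hi := hx i
  have hj := hx j
  unfold invTerm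
  simp only [entry, Prod.ext_iff] at hi hj
  generalize x.w i = wi at *
  generalize x.w j = wj at *
  generalize x.t i = ti at *
  generalize x.t j = tj at *
  refine mul_nonneg_of_single_sub_single hqp hinj ?_ ?_ <;>
    rcases hi with hi | ⟨u, v, ⟨hA, hA'⟩, hi | hi⟩ <;>
    rcases hj with hj | ⟨u', v', ⟨hB, hB'⟩, hj | hj⟩ <;>
    split_ifs at * <;> omega

lemma invTerm_arcRef_prod_mul_nonneg {q p : Fin n} (hqp : q ≠ p) (L : List (Fin n × Fin n))
    (hne : ∀ e ∈ L, e.1 ≠ e.2)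
    (hdisj : L.Pairwise fun e e' => Disjoint ({e.1, e.2} : Set (Fin n)) {e'.1, e'.2})
    (havoid : ∀ e ∈ L, ArcAvoids q p e.1 e.2) {z : Aff n}
    (hz : z = (L.map fun e => arcRef e.1 e.2).prod) {i j : Fin n} (hij : i < j) :
    0 ≤ invTerm z i j * ((Pi.single q 1 - Pi.single p 1 : Fin n → ℤ) (z.w i)
      - (Pi.single q 1 - Pi.single p 1 : Fin n → ℤ) (z.w j)) := by
  have hfix : ∀ e ∈ L, ∀ i ∉ ({e.1, e.2} : Set (Fin n)), (arcRef e.1 e.2).entry i = (i, 0) :=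
    fun e _ i hi => by
      simp only [Set.mem_insert_iff, Set.mem_singleton_iff, not_or] at hi
      exact arcRef_entry_of_ne hi.1 hi.2
  have hS := entry_list_prod L (fun e => arcRef e.1 e.2) (fun e => {e.1, e.2}) hfix hdisj
  rw [← hz] at hS
  have hloc : ∀ i, z.entry i = (i, 0) ∨
      ∃ e ∈ L, (i = e.1 ∨ i = e.2) ∧ z.entry i = (arcRef e.1 e.2).entry i := fun i => by
    by_cases h : ∃ e ∈ L, i = e.1 ∨ i = e.2
    · obtain ⟨e, he, hi⟩ := h
      exact Or.inr ⟨e, he, hi, (hS i).1 e he hi⟩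
    · exact Or.inl ((hS i).2 fun e he hi => h ⟨e, he, by simpa using hi⟩)
  refine invTerm_mul_nonneg_of_arcAvoids hqp (fun i => ?_) (fun i => ?_) hij
  · rcases hloc i with h | ⟨e, he, hi, h⟩
    · have hw : z.w i = i := congrArg Prod.fst h
      rw [hw, hw]
    · have hw : z.w i = Equiv.swap e.1 e.2 i := congrArg Prod.fst h
      have hmem : Equiv.swap e.1 e.2 i = e.1 ∨ Equiv.swap e.1 e.2 i = e.2 := by
        rcases hi with rfl | rfl <;> simp
      rw [hw]
      exact (congrArg Prod.fst ((hS _).1 e he hmem)).trans (Equiv.swap_apply_self _ _ _)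
  · rcases hloc i with h | ⟨⟨u, v⟩, he, rfl | rfl, h⟩
    · exact Or.inl h
    · exact Or.inr ⟨_, v, havoid _ he, Or.inl ⟨rfl, h.trans (arcRef_entry_left (hne _ he))⟩⟩
    · exact Or.inr ⟨u, _, havoid _ he, Or.inr ⟨rfl, h.trans (arcRef_entry_right (hne _ he))⟩⟩

end Sign

end Aff
end AffA

open AffA Aff in
theorem pow_mul_zd_reduced_general (n : ℕ) (hn : 3 ≤ n) (β β' : Fin n → ℤ)
    (hβ : IsPosRoot β) (hβ' : IsPosRoot β') (hc : β + β' = cvec n)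
    (z : Aff n)
    (l : List (Fin n → ℤ)) (hzl : z = (l.map sref).prod)
    (hroots : ∀ γ ∈ l, IsPosRoot γ ∧ γ < cvec n)
    (hpair : l.Pairwise fun γ γ' => Disconn γ γ' ∨ (Perp γ γ' ∧ (γ ≤ γ' ∨ γ' ≤ γ)))
    (hcond : ∀ γ ∈ l, inter β' γ = 0 ∨ (γ < β' ∧ Perp β' γ))
    (m : ℕ) :
    len ((sref β * sref β') ^ m * z) = len ((sref β * sref β') ^ m) + len z ∧
    len ((sref β * sref β') ^ m * z) = 2 * m * (n - 1) + len z := by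
  have hβ'_le : β' ≤ cvec n := fun i => by
    have := congrFun hc i
    simp only [Pi.add_apply, cvec] at this ⊢
    linarith [hβ.2 i]
  obtain ⟨q, p, hqp, rfl⟩ := exists_eq_arcVec hn hβ'.1 (zero_or_one_of_le_cvec hβ'.2 hβ'_le)
  obtain ⟨L, hne, rfl⟩ := exists_list_arcVec hn l hroots
  have hdisj := pairwise_disjoint_endpoints hn hne hpair
  have havoid : ∀ e ∈ L, ArcAvoids q p e.1 e.2 := fun e he =>
    arcAvoids_of_inter_eq_zero_or_lt hn hqp (hne e he) (hcond _ (List.mem_map_of_mem he))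
  have hlen := len_trE_nsmul_mul (fun i j hij => invTerm_arcRef_prod_mul_nonneg hqp L hne hdisj
    havoid (hzl.trans (list_prod_sref_arcVec hne)) hij) m
  rw [sref_mul_sref_of_add_eq_cvec hqp hc (finPart_arcVec q p), trE_pow, hlen, len_trE_nsmul,
    len_trE_single_sub_single hqp]
  exact ⟨rfl, by ring⟩

open AffA Aff in
/-- if `β + β' = c` and, for each root `γ_i` of the reduced
expression of `z_d`, either `β' ∩ γ_i = 0` or both `β' > γ_i` and `β' ⊥ γ_i`,
then `(s_β s_{β'})^m z_d` is reduced; in particular its length is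
`2m(n−1) + ℓ(z_d)`. -/
theorem pow_mul_zd_reduced (n : ℕ) (hn : 3 ≤ n) (β β' : Fin n → ℤ)
    (hβ : IsPosRoot β) (hβ' : IsPosRoot β') (hc : β + β' = cvec n)
    (d : Fin n → ℤ) (hd : ∀ i, 0 ≤ d i) (hd0 : ∃ i, d i = 0)
    (z : Aff n) (hz : IsZ d z)
    (l : List (Fin n → ℤ)) (hzl : z = (l.map sref).prod)
    (hroots : ∀ γ ∈ l, IsPosRoot γ ∧ γ < cvec n)
    (hpair : l.Pairwise fun γ γ' => Disconn γ γ' ∨ (Perp γ γ' ∧ (γ ≤ γ' ∨ γ' ≤ γ)))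
    (hred : len z = (l.map fun γ => len (sref γ)).sum)
    (hcond : ∀ γ ∈ l, inter β' γ = 0 ∨ (γ < β' ∧ Perp β' γ))
    (m : ℕ) (hm : 1 ≤ m) :
    len ((sref β * sref β') ^ m * z) = len ((sref β * sref β') ^ m) + len z ∧
    len ((sref β * sref β') ^ m * z) = 2 * m * (n - 1) + len z :=
  pow_mul_zd_reduced_general n hn β β' hβ hβ' hc z l hzl hroots hpair hcond m
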